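/- arXiv:1605.05425 — 4 statements merged into one kernel-verified Lean document; each statement's English description precedes it below -/
import Mathlib

section
/- Let R be a commutative ring that is an algebra over ℚ, let g ≥ 0 be an integer, and let x_1, …, x_{2g+3} be elements of R. Suppose that for every tuple of integers (a_1, …, a_{2g+3}) with a_1 + ⋯ + a_{2g+3} = 0 one has (∑_{i=1}^{2g+3} a_i² x_i)^{g+1} = 0 in R. Then for every tuple of nonnegative integers (k_1, …, k_{2g+3}) with k_1 + ⋯ + k_{2g+3} = g + 1, the monomial x_1^{k_1} ⋯ x_{2g+3}^{k_{2g+3}} equals 0 in R. -/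
/-!
Apply an arbitrary `ℚ`-linear functional `ℓ` to the multinomial expansion of
`(∑ aᵢ² xᵢ)^(g+1)`: the hypothesis says that `F(a₁², …, aₙ²) = 0` on the hyperplane `∑ aᵢ = 0`,
where `F` is the degree-`(g+1)` form with coefficients `multinomial(k) · ℓ(xᵏ)` (integer points
suffice by homogeneity). Regard `F(a²)` as a polynomial in `a₁` over `ℚ[a₂, …, aₙ]`. Its degree
is at most `2g + 2`, but since it is even in every variable it vanishes at all `2^(2g+2)`
distinct points `±a₂ ± ⋯ ± aₙ`. Hence `F = 0`, so `ℓ(xᵏ) = 0` for every `ℓ`, i.e. `xᵏ = 0`.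
-/

open Finset MvPolynomial

namespace MvPolynomial

variable {K : Type*} [Field K] [CharZero K]

theorem sum_units_smul_X_injective (σ : Type*) [Fintype σ] :
    Function.Injective fun ε : σ → ℤˣ => ∑ i, ((ε i : ℤ) : K) • (X i : MvPolynomial σ K) := by
  classical
  intro ε ε' hεε'
  funext j
  have := congrArg (coeff (Finsupp.single j 1)) hεε'
  simp only [coeff_sum, coeff_smul, coeff_X, Finsupp.single_left_inj one_ne_zero, smul_eq_mul,
    mul_ite, mul_one, mul_zero, Finset.sum_ite_eq', Finset.mem_univ, if_true] at this
  exact Units.ext (by exact_mod_cast this)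

theorem eq_zero_of_forall_eval_cons_signed_sum_eq_zero {m : ℕ}
    (Φ : MvPolynomial (Fin (m + 1)) K) (hdeg : degreeOf 0 Φ < 2 ^ m)
    (h : ∀ (ε : Fin m → ℤˣ) (q : Fin m → K),
      eval (Fin.cons (∑ i, ((ε i : ℤ) : K) * q i) q) Φ = 0) :
    Φ = 0 := by
  set P := finSuccEquiv K m Φ
  have hroot (ε : Fin m → ℤˣ) : P.eval (∑ i, ((ε i : ℤ) : K) • X i) = 0 := by
    refine MvPolynomial.funext fun q => ?_
    rw [← Polynomial.eval₂_hom, ← Polynomial.eval_map, ← eval_eq_eval_mv_eval']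
    simpa using h ε q
  have hP : P = 0 := by
    refine Polynomial.eq_zero_of_natDegree_lt_card_of_eval_eq_zero P
      (sum_units_smul_X_injective (Fin m)) hroot ?_
    simpa [P, natDegree_finSuccEquiv] using hdeg
  simpa [P] using hP

theorem eq_zero_of_forall_eval_sq_eq_zero_of_sum_eq_zero {m : ℕ}
    (F : MvPolynomial (Fin (m + 1)) K) (hdeg : 2 * totalDegree F < 2 ^ m)
    (h : ∀ a : Fin (m + 1) → K, ∑ i, a i = 0 → eval (a ^ 2) F = 0) :
    F = 0 := by
  refine (expand_eq_zero two_pos).mp (eq_zero_of_forall_eval_cons_signed_sum_eq_zero _ ?_ ?_)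
  · calc degreeOf 0 (expand 2 F) ≤ totalDegree (expand 2 F) := degreeOf_le_totalDegree _ _
      _ < 2 ^ m := by rwa [totalDegree_expand, mul_comm]
  · intro ε q
    set a : Fin (m + 1) → K := Fin.cons (-∑ i, ((ε i : ℤ) : K) * q i) fun i => (ε i : K) * q i
    have hsq : (Fin.cons (∑ i, ((ε i : ℤ) : K) * q i) q : Fin (m + 1) → K) ^ 2 = a ^ 2 := by
      funext i
      refine Fin.cases ?_ (fun i => ?_) i
      · simp [a]
      · have hε : ((ε i : ℤ) : K) ^ 2 = 1 := by
          rw [← Int.cast_pow, ← Units.val_pow_eq_pow_val, Int.units_sq, Units.val_one, Int.cast_one]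
        simp [a, mul_pow, hε]
    rw [eval_expand, hsq]
    exact h a (by simp [a, Fin.sum_univ_succ])

end MvPolynomial

section DualPow

variable {K R ι : Type*} [Field K] [CommRing R] [Algebra K R] [Fintype ι] [DecidableEq ι]

noncomputable def dualPowPoly (ℓ : Module.Dual K R) (x : ι → R) (d : ℕ) : MvPolynomial ι K :=
  ∑ t ∈ piAntidiag univ d,
    monomial (Finsupp.equivFunOnFinite.symm t) (Nat.multinomial univ t * ℓ (∏ i, x i ^ t i))

theorem eval_dualPowPoly (ℓ : Module.Dual K R) (x : ι → R) (d : ℕ) (b : ι → K) :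
    eval b (dualPowPoly ℓ x d) = ℓ ((∑ i, b i • x i) ^ d) := by
  rw [dualPowPoly, sum_pow_eq_sum_piAntidiag, map_sum, map_sum]
  refine sum_congr rfl fun t _ => ?_
  rw [eval_monomial, Finsupp.prod_fintype _ _ (fun _ => pow_zero _)]
  simp only [smul_pow, prod_smul, Finsupp.coe_equivFunOnFinite_symm, ← nsmul_eq_mul, map_nsmul,
    map_smul, smul_eq_mul]
  ring

theorem coeff_dualPowPoly (ℓ : Module.Dual K R) (x : ι → R) {d : ℕ} {k : ι → ℕ}
    (hk : ∑ i, k i = d) :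
    coeff (Finsupp.equivFunOnFinite.symm k) (dualPowPoly ℓ x d) =
      Nat.multinomial univ k * ℓ (∏ i, x i ^ k i) := by
  rw [dualPowPoly, coeff_sum]
  simp only [coeff_monomial, (Finsupp.equivFunOnFinite.symm.injective).eq_iff]
  rw [sum_ite_eq']
  simp [mem_piAntidiag, hk]

theorem totalDegree_dualPowPoly_le (ℓ : Module.Dual K R) (x : ι → R) (d : ℕ) :
    totalDegree (dualPowPoly ℓ x d) ≤ d := by
  refine (totalDegree_finsetSum _ _).trans (Finset.sup_le fun t ht => ?_)
  refine (totalDegree_monomial_le _ _).trans_eq ?_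
  rw [Finsupp.sum_fintype _ _ (fun _ => rfl)]
  exact (mem_piAntidiag.mp ht).1

end DualPow

theorem sum_sq_smul_pow_eq_zero_of_forall_int {R ι : Type*} [CommRing R] [Algebra ℚ R]
    [Fintype ι] (x : ι → R) (d : ℕ)
    (h : ∀ a : ι → ℤ, ∑ i, a i = 0 → (∑ i, a i ^ 2 • x i) ^ d = 0)
    (q : ι → ℚ) (hq : ∑ i, q i = 0) : (∑ i, q i ^ 2 • x i) ^ d = 0 := by
  obtain ⟨⟨N, hN⟩, hNq⟩ := IsLocalization.exist_integer_multiples_of_finite (nonZeroDivisors ℤ) q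
  choose z hz using hNq
  simp only [algebraMap_int_eq, eq_intCast, zsmul_eq_mul] at hz
  have hN0 : (N : ℚ) ≠ 0 := by exact_mod_cast nonZeroDivisors.ne_zero hN
  have hz0 : ∑ i, z i = 0 := by
    have : ((∑ i, z i : ℤ) : ℚ) = N * ∑ i, q i := by push_cast; simp [hz, mul_sum]
    rw [hq, mul_zero] at this
    exact_mod_cast this
  have hscale : (∑ i, z i ^ 2 • x i) ^ d = ((N : ℚ) ^ 2) ^ d • (∑ i, q i ^ 2 • x i) ^ d := by
    simp only [← smul_pow, smul_sum, smul_smul, ← Int.cast_smul_eq_zsmul ℚ, Int.cast_pow, hz,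
      mul_pow]
  rw [h z hz0, eq_comm, smul_eq_zero] at hscale
  exact hscale.resolve_left (pow_ne_zero _ (pow_ne_zero _ hN0))

theorem prod_pow_eq_zero_of_sum_sq_smul_pow_eq_zero {K R : Type*} [Field K] [CharZero K]
    [CommRing R] [Algebra K R] {m d : ℕ} (hd : 2 * d < 2 ^ m) (x : Fin (m + 1) → R)
    (h : ∀ b : Fin (m + 1) → K, ∑ i, b i = 0 → (∑ i, b i ^ 2 • x i) ^ d = 0)
    (k : Fin (m + 1) → ℕ) (hk : ∑ i, k i = d) : ∏ i, x i ^ k i = 0 := by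
  refine (Module.forall_dual_apply_eq_zero_iff K _).mp fun ℓ => ?_
  have hF : dualPowPoly ℓ x d = 0 := by
    refine eq_zero_of_forall_eval_sq_eq_zero_of_sum_eq_zero _ ?_ fun b hb => ?_
    · exact (Nat.mul_le_mul_left 2 (totalDegree_dualPowPoly_le ℓ x d)).trans_lt hd
    · simpa [eval_dualPowPoly] using congrArg ℓ (h b hb)
  have hcoeff := coeff_dualPowPoly ℓ x hk
  rw [hF, coeff_zero, eq_comm, mul_eq_zero] at hcoeff
  exact hcoeff.resolve_left (Nat.cast_ne_zero.mpr (Nat.multinomial_pos _ _).ne')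

theorem theta_relations_imply_psi_monomial_vanishing
    (R : Type*) [CommRing R] [Algebra ℚ R] (g : ℕ)
    (x : Fin (2 * g + 3) → R)
    (h : ∀ a : Fin (2 * g + 3) → ℤ, (∑ i, a i) = 0 →
      (∑ i, (a i) ^ 2 • x i) ^ (g + 1) = 0) :
    ∀ k : Fin (2 * g + 3) → ℕ, (∑ i, k i) = g + 1 →
      (∏ i, x i ^ k i) = 0 := by
  have hdeg : 2 * (g + 1) < 2 ^ (2 * g + 2) := by
    have := Nat.lt_two_pow_self (n := 2 * g + 2)
    omega
  exact prod_pow_eq_zero_of_sum_sq_smul_pow_eq_zero hdeg x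
    (sum_sq_smul_pow_eq_zero_of_forall_int x (g + 1) h)
end

section
/- Let R be a commutative ring that is an algebra over ℚ, let g ≥ 0 and n ≥ 2g + 3 be integers, and let x_1, …, x_n be elements of R. Suppose that for every tuple of integers (a_1, …, a_n) with a_1 + ⋯ + a_n = 0 one has (∑_{i=1}^{n} a_i² x_i)^{g+1} = 0 in R. Then for every tuple of nonnegative integers (k_1, …, k_n) with k_1 + ⋯ + k_n ≥ g + 1, the monomial x_1^{k_1} ⋯ x_n^{k_n} equals 0 in R. -/
/-!
Applying linear functionals `R → ℚ` and expanding the Θ-relation by the multinomial theorem, it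
suffices that the functions `a ↦ ∏ (aᵢ²)^kᵢ`, `∑ kᵢ = g + 1`, are linearly independent on the
integer points of the hyperplane `∑ aᵢ = 0`.

So let `F(t, u₁, …, u_m)` be a polynomial of total degree `< m` vanishing at `(a₀², …, a_m²)`
whenever `∑ aᵢ = 0`. Then `F((∑ⱼ ±Xⱼ)², X₁², …, X_m²) = 0` for every choice of signs. Flipping
the signs of the first `i` variables, `i < m`, gives `m` pairwise distinct values of `(∑ⱼ ±Xⱼ)²`
in `K[X₁, …, X_m]`, hence `m` distinct roots of `F(t, X₁², …, X_m²)` viewed as a polynomial in `t`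
of degree `< m`; so it is zero, and so is `F`.
-/

open Finset MvPolynomial

namespace ThetaRelation

def flipBelow {m : ℕ} {α : Type*} [Neg α] (i : Fin m) (a : Fin m → α) : Fin m → α :=
  fun j => if j < i then -a j else a j

lemma flipBelow_sq {m : ℕ} {R : Type*} [Ring R] (i : Fin m) (a : Fin m → R) (j : Fin m) :
    flipBelow i a j ^ 2 = a j ^ 2 := by
  unfold flipBelow
  split_ifs <;> simp

section FlippedSum

variable {R : Type*} [CommRing R] {m : ℕ}

noncomputable def flippedSum (i : Fin m) : MvPolynomial (Fin m) R :=
  ∑ j, flipBelow i X j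

lemma eval_flippedSum (w : Fin m → R) (i : Fin m) :
    eval w (flippedSum i) = ∑ j, flipBelow i w j := by
  simp only [flippedSum, map_sum, flipBelow, apply_ite (eval w), map_neg, eval_X]

lemma eval_single_flippedSum (i k : Fin m) :
    eval (Pi.single k 1) (flippedSum i : MvPolynomial (Fin m) R) = if k < i then -1 else 1 := by
  rw [eval_flippedSum, sum_eq_single k]
  · simp [flipBelow]
  · intro j _ hj
    simp [flipBelow, hj]
  · simp

lemma flippedSum_sq_injective [IsDomain R] [NeZero (2 : R)] :
    Function.Injective fun i : Fin m => (flippedSum i : MvPolynomial (Fin m) R) ^ 2 := by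
  have one_ne_neg_one : (1 : R) ≠ -1 := by
    rw [ne_eq, eq_neg_iff_add_eq_zero, one_add_one_eq_two]
    exact two_ne_zero
  intro i j hij
  by_contra hne
  rcases sq_eq_sq_iff_eq_or_eq_neg.mp hij with h | h
  · rcases lt_or_gt_of_ne hne with hlt | hlt
    · have := congrArg (eval (Pi.single i 1)) h
      simp only [eval_single_flippedSum, lt_irrefl, hlt, if_true, if_false] at this
      exact one_ne_neg_one this
    · have := congrArg (eval (Pi.single j 1)) h
      simp only [eval_single_flippedSum, lt_irrefl, hlt, if_true, if_false] at this
      exact one_ne_neg_one this.symm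
  · have := congrArg (eval (Pi.single (max i j) 1)) h
    simp only [map_neg, eval_single_flippedSum, max_lt_iff, lt_irrefl, and_false, false_and,
      if_false] at this
    exact one_ne_neg_one this

end FlippedSum

lemma eval_map_expand_finSuccEquiv {R : Type*} [CommRing R] {m : ℕ}
    (F : MvPolynomial (Fin (m + 1)) R) (t : MvPolynomial (Fin m) R) (w : Fin m → R) :
    eval w (((finSuccEquiv R m F).map (expand 2).toRingHom).eval t) =
      eval (Fin.cons (eval w t) (w ^ 2)) F := by
  rw [Polynomial.eval_map, Polynomial.hom_eval₂, eval_eq_eval_mv_eval', Polynomial.eval_map]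
  congr 1
  exact RingHom.ext (eval_expand 2 w)

theorem eq_zero_of_eval_sq_eq_zero_of_sum_eq_zero {K : Type*} [CommRing K] [IsDomain K]
    [CharZero K] {m : ℕ} (F : MvPolynomial (Fin (m + 1)) K) (hF : F.totalDegree < m)
    (h : ∀ a : Fin (m + 1) → ℤ, ∑ i, a i = 0 → eval (fun i => (a i : K) ^ 2) F = 0) :
    F = 0 := by
  set q := (finSuccEquiv K m F).map (expand 2).toRingHom
  have hroot (i : Fin m) : q.eval (flippedSum i ^ 2) = 0 := by
    refine funext_set (fun _ => Set.range ((↑) : ℤ → K))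
      (fun _ => Set.infinite_range_of_injective Int.cast_injective) fun w hw => ?_
    choose a ha using fun j => hw j trivial
    obtain rfl : w = fun j => (a j : K) := funext fun j => (ha j).symm
    let s := ∑ j, flipBelow i a j
    have hsum : ∑ k, (Fin.cons (-s) (flipBelow i a) : Fin (m + 1) → ℤ) k = 0 := by
      simp [Fin.sum_univ_succ, s]
    rw [eval_map_expand_finSuccEquiv, map_zero, ← h _ hsum]
    congr 2
    funext k
    refine Fin.cases ?_ (fun j => ?_) k
    · simp [s, eval_flippedSum, flipBelow]
    · simp only [Fin.cons_succ, Pi.pow_apply, ← Int.cast_pow, flipBelow_sq]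
  have hq : q = 0 := by
    refine Polynomial.eq_zero_of_natDegree_lt_card_of_eval_eq_zero q flippedSum_sq_injective
      hroot ?_
    calc q.natDegree ≤ (finSuccEquiv K m F).natDegree := Polynomial.natDegree_map_le
      _ = F.degreeOf 0 := natDegree_finSuccEquiv F
      _ ≤ F.totalDegree := degreeOf_le_totalDegree F 0
      _ < Fintype.card (Fin m) := by simpa using hF
  have := Polynomial.map_injective _ (expand_injective two_pos)
    (hq.trans (Polynomial.map_zero _).symm)
  simpa using this

theorem eq_zero_of_sum_prod_sq_pow_smul_eq_zero {V : Type*} [AddCommGroup V] [Module ℚ V]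
    {m d : ℕ} (hd : d < m) (c : (Fin (m + 1) → ℕ) → V)
    (h : ∀ a : Fin (m + 1) → ℤ, ∑ i, a i = 0 →
      ∑ k ∈ piAntidiag univ d, (∏ i, (a i ^ 2) ^ k i) • c k = 0) :
    ∀ k ∈ piAntidiag univ d, c k = 0 := by
  intro k hk
  rw [← Module.forall_dual_apply_eq_zero_iff ℚ]
  intro φ
  let F : MvPolynomial (Fin (m + 1)) ℚ :=
    ∑ l ∈ piAntidiag univ d, monomial (Finsupp.equivFunOnFinite.symm l) (φ (c l))
  have hdeg : F.totalDegree < m := by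
    refine (totalDegree_finsetSum _ _).trans_lt
      ((Finset.sup_lt_iff (Nat.zero_lt_of_lt hd)).mpr fun l hl => ?_)
    refine (totalDegree_monomial_le _ _).trans_lt ?_
    simpa [Finsupp.sum_fintype, (mem_piAntidiag.mp hl).1] using hd
  have hF : F = 0 := eq_zero_of_eval_sq_eq_zero_of_sum_eq_zero F hdeg fun a ha => by
    simpa [F, eval_monomial, Finsupp.prod_fintype, mul_comm] using congrArg φ (h a ha)
  simpa [F, coeff_sum, coeff_monomial, hk] using
    congrArg (coeff (Finsupp.equivFunOnFinite.symm k)) hF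

theorem sum_zsmul_pow_eq_sum_piAntidiag {R ι : Type*} [CommRing R] [Fintype ι] [DecidableEq ι]
    (a : ι → ℤ) (x : ι → R) (d : ℕ) :
    (∑ i, a i • x i) ^ d =
      ∑ k ∈ piAntidiag univ d, (∏ i, a i ^ k i) • (Nat.multinomial univ k • ∏ i, x i ^ k i) := by
  rw [sum_pow_eq_sum_piAntidiag]
  refine sum_congr rfl fun k _ => ?_
  simp only [smul_pow, prod_smul, nsmul_eq_mul, mul_smul_comm]

theorem prod_pow_eq_zero_of_le_sum {M ι : Type*} [CommMonoidWithZero M] [Fintype ι]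
    (x : ι → M) {d : ℕ} (h : ∀ k : ι → ℕ, ∑ i, k i = d → ∏ i, x i ^ k i = 0)
    (k : ι → ℕ) (hk : d ≤ ∑ i, k i) : ∏ i, x i ^ k i = 0 := by
  obtain ⟨l, hlk, hl⟩ := Finsupp.exists_le_degree_eq (Finsupp.equivFunOnFinite.symm k) d
    (by simpa [Finsupp.degree_eq_sum] using hk)
  have hsplit : ∏ i, x i ^ k i = (∏ i, x i ^ l i) * ∏ i, x i ^ (k i - l i) := by
    rw [← prod_mul_distrib]
    exact prod_congr rfl fun i _ => by
      rw [← pow_add, Nat.add_sub_cancel' (show l i ≤ k i from hlk i)]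
  rw [hsplit, h l (by simpa [Finsupp.degree_eq_sum] using hl), zero_mul]

end ThetaRelation

open ThetaRelation in
theorem theta_relations_imply_psi_vanishing_general
    (R : Type*) [CommRing R] [Algebra ℚ R] (g n : ℕ) (hn : 2 * g + 3 ≤ n)
    (x : Fin n → R)
    (h : ∀ a : Fin n → ℤ, (∑ i, a i) = 0 →
      (∑ i, (a i) ^ 2 • x i) ^ (g + 1) = 0) :
    ∀ k : Fin n → ℕ, g + 1 ≤ (∑ i, k i) →
      (∏ i, x i ^ k i) = 0 := by
  obtain ⟨m, rfl⟩ : ∃ m, n = m + 1 := ⟨n - 1, by omega⟩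
  have hmultinomial := eq_zero_of_sum_prod_sq_pow_smul_eq_zero (by omega : g + 1 < m)
    (fun k => Nat.multinomial univ k • ∏ i, x i ^ k i) fun a ha => by
      rw [← sum_zsmul_pow_eq_sum_piAntidiag]
      exact h a ha
  refine prod_pow_eq_zero_of_le_sum x fun k hk => ?_
  have hk' := hmultinomial k (mem_piAntidiag.mpr ⟨hk, by simp⟩)
  rw [← Nat.cast_smul_eq_nsmul ℚ] at hk'
  exact (smul_eq_zero.mp hk').resolve_left (Nat.cast_ne_zero.mpr (Nat.multinomial_pos _ _).ne')
end

section
/- For a commutative ring R and elements x_1, …, x_{2g+2}, y ∈ R (g ≥ 0 an integer), consider the polynomial P = (∑_{i=1}^{2g+2} A_i² x_i + (A_1 + ⋯ + A_{2g+2})² y)^{g+1} in the polynomial ring R[A_1, …, A_{2g+2}]. Then the coefficient of the squarefree monomial A_1 A_2 ⋯ A_{2g+2} in P equals (2g+2)! · y^{g+1}. -/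
/-!
Every monomial of `∑ Aᵢ² xᵢ` contains a square, and `(a + b)ⁿ - bⁿ` is a multiple of `a`, so the
squarefree coefficient of `P` is that of `((∑ Aᵢ)² y)^(g+1) = y^(g+1) (∑ Aᵢ)^(2g+2)`. By the
multinomial theorem the coefficient of `A₁ ⋯ A_{2g+2}` in `(∑ Aᵢ)^(2g+2)` is `(2g+2)!`.
-/

namespace MvPolynomial

variable {R σ : Type*}

theorem coeff_X_pow_mul_of_lt [CommSemiring R] {m : σ →₀ ℕ} {i : σ} {n : ℕ} (h : m i < n)
    (p : MvPolynomial σ R) : coeff m (X i ^ n * p) = 0 := by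
  rw [X_pow_eq_monomial, coeff_monomial_mul', if_neg]
  simpa [Finsupp.single_le_iff] using h

theorem coeff_sum_X_sq_mul_add_pow [CommRing R] [Fintype σ] {m : σ →₀ ℕ} (hm : ∀ i, m i < 2)
    (x : σ → R) (q : MvPolynomial σ R) (n : ℕ) :
    coeff m ((∑ i, X i ^ 2 * C (x i) + q) ^ n) = coeff m (q ^ n) := by
  set a : MvPolynomial σ R := ∑ i, X i ^ 2 * C (x i)
  obtain ⟨c, hc⟩ := sub_dvd_pow_sub_pow (a + q) q n
  rw [add_sub_cancel_right] at hc
  have hac : coeff m (a * c) = 0 := by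
    simp only [a, Finset.sum_mul, coeff_sum, mul_assoc, coeff_X_pow_mul_of_lt (hm _),
      Finset.sum_const_zero]
  rw [← sub_eq_zero, ← coeff_sub, hc, hac]

theorem coeff_sum_X_pow_card_eq_factorial [CommSemiring R] [Fintype σ] :
    coeff (Finsupp.equivFunOnFinite.symm fun _ : σ => 1)
      ((∑ i, X i : MvPolynomial σ R) ^ Fintype.card σ) = (Fintype.card σ).factorial := by
  classical
  rw [coeff_sum_X_pow_of_fintype, if_pos (by simp [Finsupp.sum_fintype]),
    Finsupp.multinomial_eq_of_support_subset (Finset.subset_univ _)]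
  have h := Nat.multinomial_spec Finset.univ (fun _ : σ => 1)
  simp only [Finset.prod_const_one, Nat.factorial_one, one_mul, Finset.sum_const, Finset.card_univ,
    smul_eq_mul, mul_one] at h
  rw [Finsupp.coe_equivFunOnFinite_symm, h]

end MvPolynomial

theorem squarefree_coefficient_of_theta_power
    (R : Type*) [CommRing R] (g : ℕ)
    (x : Fin (2 * g + 2) → R) (y : R) :
    MvPolynomial.coeff
      (Finsupp.equivFunOnFinite.symm fun _ : Fin (2 * g + 2) => 1)
      ((∑ i, (MvPolynomial.X i) ^ 2 * MvPolynomial.C (x i) +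
        (∑ i, MvPolynomial.X i) ^ 2 * MvPolynomial.C y) ^ (g + 1))
      = (2 * g + 2).factorial • y ^ (g + 1) := by
  have hcard : 2 * (g + 1) = Fintype.card (Fin (2 * g + 2)) := by rw [Fintype.card_fin]; ring
  rw [MvPolynomial.coeff_sum_X_sq_mul_add_pow (fun _ => by simp), mul_pow, ← pow_mul, ← map_pow,
    mul_comm _ (MvPolynomial.C _), MvPolynomial.coeff_C_mul, hcard,
    MvPolynomial.coeff_sum_X_pow_card_eq_factorial, Fintype.card_fin, nsmul_eq_mul']
end

section
/- Let R be a commutative ring, let g ≥ 0 and k be integers with 1 ≤ k ≤ g + 1, and let x_1, …, x_{2g+2}, y ∈ R. Let k_1, …, k_{2g+2} be nonnegative integers with k_1 + ⋯ + k_{2g+2} = g + 1 − (k − 1), let I = {i : k_i = 0}, let j be the 2(k−1)-st smallest element of I (which exists since #I ≥ 2(k−1)), and define m_i = 2k_i if k_i > 0, m_i = 1 if k_i = 0 and i ≤ j, and m_i = 0 if k_i = 0 and i > j. Consider the polynomial P = (∑_{i=1}^{2g+2} A_i² x_i + (A_1 + ⋯ + A_{2g+2})² y)^{g+1} in the polynomial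 ring R[A_1, …, A_{2g+2}]. Then there exists a positive integer C (independent of R, x, y) such that the coefficient of A_1^{m_1} ⋯ A_{2g+2}^{m_{2g+2}} in P equals C · x_1^{k_1} ⋯ x_{2g+2}^{k_{2g+2}} y^{k−1} plus an element of the additive subgroup of R generated by the products x_1^{K_1} ⋯ x_{2g+2}^{K_{2g+2}} y^{l} with K_1 + ⋯ + K_{2g+2} + l = g + 1 and l ≥ k. -/
/-!
Write `S = ∑ A_i` and expand `(∑ x_i A_i² + y S²)^N` by the multinomial theorem: the term
`x^d y^l` comes with `S^(2l)`, so it reaches the monomial `A^m` through the coefficient of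
`A^c` in `S^(2l)`, where `m = 2d + c` and `∑ c = 2l`. If `m` has exactly `2a` entries equal to `1`
and all others even, then `c` is at least `1` at each of those entries, so `l ≥ a`; and `l = a`
forces `c` to be their indicator and `d = K`. Thus the `y^a`-part of the coefficient is a single
multinomial multiple of `x^K y^a`, and everything else has `y`-degree above `a`.
-/

open Finset MvPolynomial

theorem card_filter_ne_zero_le_sum {ι : Type*} (s : Finset ι) (f : ι → ℕ) :
    #{i ∈ s | f i ≠ 0} ≤ ∑ i ∈ s, f i :=
  calc #{i ∈ s | f i ≠ 0} = ∑ _ ∈ s with f _ ≠ 0, 1 := card_eq_sum_ones _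
    _ ≤ ∑ i ∈ s with f i ≠ 0, f i :=
      sum_le_sum fun _ hi => Nat.one_le_iff_ne_zero.2 (mem_filter.1 hi).2
    _ ≤ ∑ i ∈ s, f i := sum_le_sum_of_subset (filter_subset _ _)

theorem card_filter_rank_le_eq_min {α : Type*} [LinearOrder α] (I : Finset α) (t : ℕ) :
    #{i ∈ I | #{i' ∈ I | i' ≤ i} ≤ t} = min t #I := by
  induction I using Finset.induction_on_max with
  | empty => simp
  | insert a s ha ih =>
    have has : a ∉ s := fun h => lt_irrefl a (ha a h)
    have hrank : ∀ i ∈ s, #{i' ∈ insert a s | i' ≤ i} = #{i' ∈ s | i' ≤ i} := by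
      intro i hi
      rw [filter_insert, if_neg (ha i hi).not_ge]
    have htop : #{i' ∈ insert a s | i' ≤ a} = #s + 1 := by
      rw [filter_true_of_mem fun i hi => ?_, card_insert_of_notMem has]
      rcases mem_insert.1 hi with rfl | hi
      exacts [le_rfl, (ha i hi).le]
    rw [filter_insert, htop, filter_congr fun i hi => by rw [hrank i hi], card_insert_of_notMem has]
    split_ifs with h
    · rw [card_insert_of_notMem fun h' => has (mem_filter.1 h').1, ih]; omega
    · rw [ih]; omega

theorem eq_and_eq_ite_of_two_mul_add_eq {σ : Type*} [Fintype σ] [DecidableEq σ] {O : Finset σ}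
    {K d c : σ → ℕ} (hKO : ∀ i ∈ O, K i = 0) (hc : ∑ i, c i ≤ #O)
    (h : ∀ i, 2 * d i + c i = if i ∈ O then 1 else 2 * K i) :
    d = K ∧ c = fun i => if i ∈ O then 1 else 0 := by
  have hcO : ∀ i ∈ O, c i = 1 := fun i hi => by have := h i; rw [if_pos hi] at this; omega
  have hc0 : ∀ i ∉ O, c i = 0 := by
    have hsplit := sum_sdiff (f := c) (subset_univ O)
    rw [sum_congr rfl hcO, sum_const, smul_eq_mul, mul_one] at hsplit
    have hrest : ∑ i ∈ univ \ O, c i = 0 := by omega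
    exact fun i hi => sum_eq_zero_iff.1 hrest i (by simpa using hi)
  constructor
  · funext i
    have := h i
    by_cases hi : i ∈ O
    · rw [if_pos hi] at this; rw [hKO i hi]; omega
    · rw [if_neg hi, hc0 i hi] at this; omega
  · funext i
    split_ifs with hi
    exacts [hcO i hi, hc0 i hi]

section

variable {σ R : Type*} [Fintype σ]

noncomputable def sumSqForm [CommSemiring R] (x : σ → R) (y : R) : MvPolynomial σ R :=
  ∑ i, X i ^ 2 * C (x i) + (∑ i, X i) ^ 2 * C y

theorem sumSqForm_pow [CommSemiring R] [DecidableEq σ] (x : σ → R) (y : R) (N : ℕ) :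
    sumSqForm x y ^ N = ∑ d ∈ piAntidiag univ N, Nat.multinomial univ d •
      ((∑ i, X i) ^ (2 * d none) *
        monomial (Finsupp.equivFunOnFinite.symm fun i => 2 * d (some i))
          ((∏ i, x i ^ d (some i)) * y ^ d none)) := by
  have hsplit : sumSqForm x y = ∑ j : Option σ,
      j.elim ((∑ i, X i) ^ 2 * C y) fun i => monomial (Finsupp.single i 2) (x i) := by
    simp [sumSqForm, Fintype.sum_option, X_pow_eq_monomial, mul_comm _ (C _), C_mul_monomial,
      add_comm]
  rw [hsplit, sum_pow_eq_sum_piAntidiag]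
  refine sum_congr rfl fun d _ => ?_
  rw [Fintype.prod_option, nsmul_eq_mul]
  simp only [Option.elim, mul_pow, ← pow_mul, ← map_pow, monomial_pow, ← monomial_sum_prod,
    mul_assoc, C_mul_monomial]
  congr 3
  · refine congrArg _ (Finsupp.ext fun i => ?_)
    simp [Finsupp.finsetSum_apply, Finsupp.single_apply, mul_comm]
  · exact mul_comm _ _

theorem coeff_sumSqForm_pow [CommSemiring R] [DecidableEq σ] (x : σ → R) (y : R) (N : ℕ)
    (m : σ → ℕ) :
    coeff (Finsupp.equivFunOnFinite.symm m) (sumSqForm x y ^ N) =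
      ∑ d ∈ piAntidiag univ N,
        if (∀ i, 2 * d (some i) ≤ m i) ∧ ∑ i, (m i - 2 * d (some i)) = 2 * d none then
          (Nat.multinomial univ d * Nat.multinomial univ fun i => m i - 2 * d (some i)) •
            ((∏ i, x i ^ d (some i)) * y ^ d none)
        else 0 := by
  rw [sumSqForm_pow, coeff_sum]
  refine sum_congr rfl fun d _ => ?_
  rw [coeff_smul, coeff_mul_monomial']
  have hle : (Finsupp.equivFunOnFinite.symm fun i => 2 * d (some i)) ≤
      Finsupp.equivFunOnFinite.symm m ↔ ∀ i, 2 * d (some i) ≤ m i := Finsupp.le_def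
  have hsub : Finsupp.equivFunOnFinite.symm m - Finsupp.equivFunOnFinite.symm
      (fun i => 2 * d (some i)) = Finsupp.equivFunOnFinite.symm fun i => m i - 2 * d (some i) :=
    Finsupp.ext fun i => rfl
  rw [hsub, coeff_sum_X_pow_of_fintype, Finsupp.equivFunOnFinite_symm_sum,
    Finsupp.multinomial_eq_of_support_subset (subset_univ _)]
  by_cases h : ∀ i, 2 * d (some i) ≤ m i
  · by_cases h' : ∑ i, (m i - 2 * d (some i)) = 2 * d none
    · simp [hle, h, h', nsmul_eq_mul, mul_assoc]
    · simp [hle, h, h']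
  · simp [hle, h]

theorem coeff_sumSqForm_pow_eq_smul_add [CommRing R] [DecidableEq σ] (x : σ → R) (y : R)
    {O : Finset σ} {K : σ → ℕ} {a N : ℕ} (hKO : ∀ i ∈ O, K i = 0) (hO : #O = 2 * a)
    (hN : ∑ i, K i + a = N) :
    ∃ z ∈ AddSubgroup.closure {r : R | ∃ (L : σ → ℕ) (l : ℕ),
        ∑ i, L i + l = N ∧ a < l ∧ r = (∏ i, x i ^ L i) * y ^ l},
      coeff (Finsupp.equivFunOnFinite.symm fun i => if i ∈ O then 1 else 2 * K i)
          (sumSqForm x y ^ N) =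
        (Nat.multinomial univ (fun j : Option σ => j.elim a K) *
            Nat.multinomial univ fun i => if i ∈ O then 1 else 0) •
          ((∏ i, x i ^ K i) * y ^ a) + z := by
  set m : σ → ℕ := fun i => if i ∈ O then 1 else 2 * K i
  set dK : Option σ → ℕ := fun j => j.elim a K
  have hcK : (fun i => m i - 2 * dK (some i)) = fun i => if i ∈ O then 1 else 0 := by
    funext i
    by_cases hi : i ∈ O <;> simp [m, dK, hi, hKO]
  have hdK : dK ∈ piAntidiag univ N := by
    simp [mem_piAntidiag, Fintype.sum_option, dK]
    omega
  have huniq : ∀ d : Option σ → ℕ, ¬ a < d none →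
      ((∀ i, 2 * d (some i) ≤ m i) ∧ ∑ i, (m i - 2 * d (some i)) = 2 * d none) → d = dK := by
    rintro d hda ⟨hle, hsum⟩
    obtain ⟨hdK', hc⟩ := eq_and_eq_ite_of_two_mul_add_eq (d := fun i => d (some i))
      (c := fun i => m i - 2 * d (some i)) hKO (by omega)
      fun i => by have := hle i; simp only [m] at this ⊢; omega
    rw [hc, sum_boole, Nat.cast_id, filter_mem_eq_inter, univ_inter] at hsum
    funext j
    cases j with
    | none => simp only [dK, Option.elim]; omega
    | some i => exact congrFun hdK' i
  rw [coeff_sumSqForm_pow, ← sum_filter_add_sum_filter_not _ fun d => a < d none, add_comm]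
  refine ⟨_, AddSubgroup.sum_mem _ fun d hd => ?_, congrArg (· + _) ?_⟩
  · rw [mem_filter, mem_piAntidiag, Fintype.sum_option] at hd
    split_ifs
    · refine AddSubgroup.nsmul_mem _ (AddSubgroup.subset_closure ?_) _
      exact ⟨fun i => d (some i), d none, by beta_reduce; omega, hd.2, rfl⟩
    · exact zero_mem _
  · rw [sum_eq_single_of_mem dK (mem_filter.2 ⟨hdK, by simp [dK]⟩)
      fun d hd hne => if_neg fun h => hne (huniq d (mem_filter.1 hd).2 h), if_pos, hcK]
    · rfl
    · refine ⟨fun i => by by_cases hi : i ∈ O <;> simp [m, dK, hi, hKO], ?_⟩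
      rw [hcK, sum_boole]
      simp [dK, hO]

end

theorem inductive_step_coefficient
    (g k : ℕ) (hk1 : 1 ≤ k) (hk2 : k ≤ g + 1)
    (K : Fin (2 * g + 2) → ℕ) (hK : (∑ i, K i) = g + 1 - (k - 1)) :
    ∃ C : ℕ, 0 < C ∧
      ∀ (R : Type) [inst : CommRing R] (x : Fin (2 * g + 2) → R) (y : R),
        ∃ z ∈ AddSubgroup.closure {r : R | ∃ (L : Fin (2 * g + 2) → ℕ) (l : ℕ),
            (∑ i, L i) + l = g + 1 ∧ k ≤ l ∧ r = (∏ i, x i ^ L i) * y ^ l},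
          MvPolynomial.coeff
            (Finsupp.equivFunOnFinite.symm fun i : Fin (2 * g + 2) =>
              if K i = 0 then
                (if ((Finset.univ.filter fun i' => K i' = 0).filter
                      fun i' => i' ≤ i).card ≤ 2 * (k - 1) then 1 else 0)
              else 2 * K i)
            ((∑ i, (MvPolynomial.X i) ^ 2 * MvPolynomial.C (x i) +
              (∑ i, MvPolynomial.X i) ^ 2 * MvPolynomial.C y) ^ (g + 1))
          = C • ((∏ i, x i ^ K i) * y ^ (k - 1)) + z := by
  obtain ⟨a, rfl⟩ : ∃ a, k = a + 1 := ⟨k - 1, by omega⟩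
  rw [Nat.add_sub_cancel] at hK ⊢
  set I := univ.filter fun i => K i = 0
  set O := I.filter fun i => #(I.filter fun i' => i' ≤ i) ≤ 2 * a
  have hI : #I + #{i | K i ≠ 0} = 2 * g + 2 := by
    rw [card_filter_add_card_filter_not, card_univ, Fintype.card_fin]
  have hO : #O = 2 * a := by
    have := card_filter_ne_zero_le_sum univ K
    rw [card_filter_rank_le_eq_min, min_eq_left (by omega)]
  have hexp : (fun i => if K i = 0 then (if #(I.filter fun i' => i' ≤ i) ≤ 2 * a then 1 else 0)
      else 2 * K i) = fun i => if i ∈ O then 1 else 2 * K i := by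
    funext i
    by_cases hi : K i = 0 <;> simp [O, I, hi]
  refine ⟨Nat.multinomial univ (fun j : Option _ => j.elim a K) *
      Nat.multinomial univ (fun i => if i ∈ O then 1 else 0),
    Nat.mul_pos (Nat.multinomial_pos _ _) (Nat.multinomial_pos _ _), fun R _ x y => ?_⟩
  rw [hexp]
  exact coeff_sumSqForm_pow_eq_smul_add x y (fun i hi => (mem_filter.1 (mem_filter.1 hi).1).2) hO
    (by omega)
end
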